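/- Every real tensor of format 2×3×5 has tensor rank at most 5. -/

import Mathlib

/-!
Slice `T` along its last index into `n` matrices of size `2 × m`. If `n < 2m` they lie in a
hyperplane `ker φ` of the space of `2 × m` matrices, and every hyperplane is spanned by the outer
products `a uᵀ` it contains. Indeed, given one outer product `w` with `φ w ≠ 0`, each outer product
can be moved into `ker φ` by subtracting a multiple of an outer product sharing a factor with it; so
the outer products in `ker φ` together with `w` span the whole space, and hence they alone span
`ker φ`. A basis of `ker φ` made of outer products has `2m - 1` elements, and expanding every slice
in it writes `T` as a sum of `2m - 1` rank-one tensors.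
-/

/-- The rank of a real 2 x m x n tensor: the least natural number `r` such that
the tensor is a sum of `r` rank-one tensors. -/
noncomputable def tensorRank {m n : ℕ} (T : Fin 2 → Fin m → Fin n → ℝ) : ℕ :=
  sInf {r : ℕ | ∃ (a : Fin r → Fin 2 → ℝ) (u : Fin r → Fin m → ℝ) (v : Fin r → Fin n → ℝ),
    ∀ i j k, T i j k = ∑ t, a t i * u t j * v t k}

open Matrix Submodule Set Module

section

def Matrix.outerProducts (ι κ K : Type*) [Mul K] : Set (Matrix ι κ K) :=
  {M | ∃ a u, vecMulVec a u = M}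

variable {ι κ K : Type*} [Field K] [Fintype ι] [Fintype κ]

theorem Matrix.span_outerProducts : span K (outerProducts ι κ K) = ⊤ := by
  classical
  refine eq_top_iff.2 fun M _ => ?_
  rw [matrix_eq_sum_single M]
  refine sum_mem fun i _ => sum_mem fun j _ =>
    subset_span ⟨M i j • Pi.single i 1, Pi.single j 1, ?_⟩
  rw [smul_vecMulVec, ← single_eq_single_vecMulVec_single, smul_single, smul_eq_mul, mul_one]

theorem Matrix.span_outerProducts_inter_ker (φ : Matrix ι κ K →ₗ[K] K) :
    span K (outerProducts ι κ K ∩ LinearMap.ker φ) = LinearMap.ker φ := by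
  set S := span K (outerProducts ι κ K ∩ LinearMap.ker φ)
  refine le_antisymm (span_le.2 inter_subset_right) ?_
  by_cases hφ : ∀ M ∈ outerProducts ι κ K, φ M = 0
  · calc LinearMap.ker φ ≤ span K (outerProducts ι κ K) := by rw [span_outerProducts]; exact le_top
      _ ≤ S := span_mono fun M hM => ⟨hM, hφ M hM⟩
  push Not at hφ
  obtain ⟨_, ⟨a₀, u₀, rfl⟩, hw⟩ := hφ
  set Q := S ⊔ K ∙ vecMulVec a₀ u₀
  have mem_Q {x y} (hyQ : y ∈ Q) (hy : φ y ≠ 0)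
      (hx : x - (φ x / φ y) • y ∈ outerProducts ι κ K) : x ∈ Q := by
    have hker : x - (φ x / φ y) • y ∈ S := subset_span ⟨hx, by simp [hy]⟩
    simpa using Q.add_mem (mem_sup_left hker) (Q.smul_mem (φ x / φ y) hyQ)
  have hw_mem : vecMulVec a₀ u₀ ∈ Q := mem_sup_right (mem_span_singleton_self _)
  have left_mem (a) : vecMulVec a u₀ ∈ Q :=
    mem_Q hw_mem hw ⟨a - (φ (vecMulVec a u₀) / φ (vecMulVec a₀ u₀)) • a₀, u₀, by
      rw [sub_vecMulVec, smul_vecMulVec]⟩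
  have right_mem (u) : vecMulVec a₀ u ∈ Q :=
    mem_Q hw_mem hw ⟨a₀, u - (φ (vecMulVec a₀ u) / φ (vecMulVec a₀ u₀)) • u₀, by
      rw [vecMulVec_sub, vecMulVec_smul]⟩
  have mem_of_ne {a} (u) (ha : φ (vecMulVec a u₀) ≠ 0) : vecMulVec a u ∈ Q :=
    mem_Q (left_mem a) ha ⟨a, u - (φ (vecMulVec a u) / φ (vecMulVec a u₀)) • u₀, by
      rw [vecMulVec_sub, vecMulVec_smul]⟩
  have hQ : Q = ⊤ := by
    rw [eq_top_iff, ← span_outerProducts, span_le]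
    rintro _ ⟨a, u, rfl⟩
    by_cases ha : φ (vecMulVec a u₀) = 0
    · have hsum : φ (vecMulVec (a + a₀) u₀) ≠ 0 := by rwa [add_vecMulVec, map_add, ha, zero_add]
      simpa [add_vecMulVec] using Q.sub_mem (mem_of_ne u hsum) (right_mem u)
    · exact mem_of_ne u ha
  intro x hx
  obtain ⟨s, hs, _, hcw, rfl⟩ := mem_sup.1 (hQ ▸ mem_top : x ∈ Q)
  obtain ⟨c, rfl⟩ := mem_span_singleton.1 hcw
  have hφs : φ s = 0 := span_le.2 inter_subset_right hs
  have hc : c = 0 := by simpa [hφs, hw] using hx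
  simpa [hc] using hs

theorem Matrix.exists_le_span_outerProducts_of_ne_top (V : Submodule K (Matrix ι κ K))
    (hV : V ≠ ⊤) : ∃ r < Fintype.card ι * Fintype.card κ,
      ∃ (a : Fin r → ι → K) (u : Fin r → κ → K),
        V ≤ span K (range fun t => vecMulVec (a t) (u t)) := by
  obtain ⟨φ, hφ, hVφ⟩ := V.exists_le_ker_of_lt_top hV.lt_top
  have hspan := span_outerProducts_inter_ker φ
  obtain ⟨f, hf_mem, hf_span, -⟩ :=
    exists_fun_fin_finrank_span_eq K (outerProducts ι κ K ∩ LinearMap.ker φ)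
  choose a u hau using fun t => (hf_mem t).1
  refine ⟨_, ?_, a, u, ?_⟩
  · rw [hspan]
    simpa [finrank_matrix] using Submodule.finrank_lt (mt LinearMap.ker_eq_top.1 hφ)
  · simpa only [hau, hf_span, hspan] using hVφ

end

theorem tensorRank_le_of_slices_mem_span {m n r : ℕ} (T : Fin 2 → Fin m → Fin n → ℝ)
    (a : Fin r → Fin 2 → ℝ) (u : Fin r → Fin m → ℝ)
    (h : ∀ k, Matrix.of (fun i j => T i j k) ∈ span ℝ (range fun t => vecMulVec (a t) (u t))) :
    tensorRank T ≤ r := by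
  choose c hc using fun k => (mem_span_range_iff_exists_fun ℝ).1 (h k)
  refine Nat.sInf_le ⟨a, u, fun t k => c k t, fun i j k => ?_⟩
  have := congrFun₂ (hc k) i j
  simp only [Matrix.sum_apply, Matrix.smul_apply, vecMulVec_apply, smul_eq_mul, of_apply] at this
  rw [← this]
  exact Finset.sum_congr rfl fun t _ => by ring

theorem tensorRank_lt_two_mul_of_lt {m n : ℕ} (T : Fin 2 → Fin m → Fin n → ℝ) (hn : n < 2 * m) :
    tensorRank T < 2 * m := by
  set V := span ℝ (range fun k => Matrix.of (fun i j => T i j k))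
  have hV : V ≠ ⊤ := by
    intro hV
    have hle : finrank ℝ V ≤ n := by
      simpa [Set.finrank] using finrank_range_le_card (R := ℝ) fun k => Matrix.of fun i j => T i j k
    rw [hV, finrank_top, finrank_matrix, Fintype.card_fin, Fintype.card_fin, finrank_self] at hle
    omega
  obtain ⟨r, hr, a, u, hVr⟩ := exists_le_span_outerProducts_of_ne_top V hV
  have := tensorRank_le_of_slices_mem_span T a u fun k => hVr (subset_span (mem_range_self k))
  rw [Fintype.card_fin, Fintype.card_fin] at hr
  omega

theorem stmt_5 (T : Fin 2 → Fin 3 → Fin 5 → ℝ) :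
    tensorRank T ≤ 5 := by
  have := tensorRank_lt_two_mul_of_lt T (by norm_num)
  omega
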